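/- arXiv:2605.15887 — 8 statements merged into one kernel-verified Lean document; each statement's English description precedes it below -/
import Mathlib

section
/- Let d, n, t be natural numbers with n > (d+1)·t, and let v : Fin n → EuclideanSpace ℝ (Fin d) be any family of n points. Then there exists a point y ∈ EuclideanSpace ℝ (Fin d) such that for every subset T ⊆ Fin n with |T| = n − t, y lies in the convex hull of {v i : i ∈ T}. (In particular, y lies in every closed ball, hence in the minimum enclosing ball, of every such subset, so n > (d+1)t nodes suffice to satisfy MEB validity.) -/
/-!
Every `n - t` of the points omit only `t` of them, so any `d + 1` such subsets together omit at
most `(d + 1) t < n` points and hence share a point `v i`. The convex hulls of the `(n - t)`-subsets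
therefore meet `d + 1` at a time, and Helly's theorem makes them all meet.
-/

open Finset Module

theorem Finset.exists_mem_forall_of_card_mul_lt {α : Type*} [Fintype α] [DecidableEq α]
    {I : Finset (Finset α)} {t : ℕ} (hI : ∀ T ∈ I, #Tᶜ ≤ t)
    (hcard : #I * t < Fintype.card α) :
    ∃ a, ∀ T ∈ I, a ∈ T := by
  have hmissed : #(I.biUnion compl) < Fintype.card α :=
    calc #(I.biUnion compl) ≤ ∑ T ∈ I, #Tᶜ := card_biUnion_le
      _ ≤ ∑ _T ∈ I, t := sum_le_sum hI
      _ = #I * t := by rw [sum_const, smul_eq_mul]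
      _ < Fintype.card α := hcard
  obtain ⟨a, ha⟩ := exists_mem_notMem_of_card_lt_card (s := I.biUnion compl) (t := univ)
    (by rwa [card_univ])
  refine ⟨a, fun T hT => ?_⟩
  by_contra haT
  exact ha.2 (mem_biUnion.mpr ⟨T, hT, mem_compl.mpr haT⟩)

theorem exists_forall_mem_convexHull_of_card_compl_le {𝕜 E ι : Type*} [Field 𝕜]
    [LinearOrder 𝕜] [IsStrictOrderedRing 𝕜] [AddCommGroup E] [Module 𝕜 E]
    [FiniteDimensional 𝕜 E] [Fintype ι] [DecidableEq ι] (v : ι → E) {t : ℕ}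
    (hcard : (finrank 𝕜 E + 1) * t < Fintype.card ι) :
    ∃ y, ∀ T : Finset ι, #Tᶜ ≤ t → y ∈ convexHull 𝕜 (v '' T) := by
  obtain ⟨y, hy⟩ := Convex.helly_theorem' (𝕜 := 𝕜)
    (s := univ.filter fun T : Finset ι => #Tᶜ ≤ t)
    (F := fun T : Finset ι => convexHull 𝕜 (v '' T)) (fun _ _ => convex_convexHull 𝕜 _) <| by
      intro I hIs hI
      have hIt : ∀ T ∈ I, #Tᶜ ≤ t := fun T hT => (mem_filter.mp (hIs hT)).2
      obtain ⟨i, hi⟩ := exists_mem_forall_of_card_mul_lt hIt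
        ((Nat.mul_le_mul_right t hI).trans_lt hcard)
      exact ⟨v i, Set.mem_iInter₂.mpr fun T hT =>
        subset_convexHull 𝕜 _ (Set.mem_image_of_mem v (mem_coe.mpr (hi T hT)))⟩
  exact ⟨y, fun T hT => Set.mem_iInter₂.mp hy T (mem_filter.mpr ⟨mem_univ T, hT⟩)⟩

/-- If `n > (d+1)·t`, there is a point lying in the convex hull of `{v i : i ∈ T}`
for every subset `T ⊆ Fin n` of cardinality `n - t` (hence in the minimum enclosing
ball of every such subset), so `n > (d+1)t` nodes suffice for MEB validity. -/
theorem meb_validity_sufficient (d n t : ℕ) (hn : n > (d + 1) * t)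
    (v : Fin n → EuclideanSpace ℝ (Fin d)) :
    ∃ y : EuclideanSpace ℝ (Fin d),
      ∀ T : Finset (Fin n), T.card = n - t → y ∈ convexHull ℝ (v '' (T : Set (Fin n))) := by
  obtain ⟨y, hy⟩ := exists_forall_mem_convexHull_of_card_compl_le (𝕜 := ℝ) v (t := t)
    (by rwa [finrank_euclideanSpace_fin, Fintype.card_fin])
  refine ⟨y, fun T hT => hy T ?_⟩
  rw [card_compl, Fintype.card_fin, hT]
  omega
end

section
/- (Soddy–Gosset theorem, externally tangent version.) Let d ≥ 1 and let c : Fin (d+2) → EuclideanSpace ℝ (Fin d) and r : Fin (d+2) → ℝ with r i > 0 for all i, such that the d+2 closed balls closedBall(c i, r i) are mutually externally tangent, i.e., dist(c i, c j) = r i + r j for all i ≠ j. Let b i = 1 / (r i) denote the bends. Then (∑_{i} b i)² = d · ∑_{i} (b i)². -/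
open Finset
open scoped RealInnerProductSpace

/-- Soddy–Gosset theorem (externally tangent version): for `d + 2` mutually externally
tangent balls in `ℝ^d` with positive radii `r i` and bends `b i = 1 / r i`, the square of
the sum of the bends equals `d` times the sum of the squares of the bends. -/
theorem soddy_gosset (d : ℕ) (hd : 1 ≤ d)
    (c : Fin (d + 2) → EuclideanSpace ℝ (Fin d)) (r : Fin (d + 2) → ℝ)
    (hr : ∀ i, 0 < r i)
    (htan : ∀ i j, i ≠ j → dist (c i) (c j) = r i + r j) :
    (∑ i, 1 / r i) ^ 2 = d * ∑ i, (1 / r i) ^ 2 := by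
  -- difference vectors
  set p : Fin (d+1) → EuclideanSpace ℝ (Fin d) := fun i => c i.succ - c 0 with hp
  have hdep : ¬ LinearIndependent ℝ p := by
    intro h
    have h2 := h.fintype_card_le_finrank
    simp [finrank_euclideanSpace] at h2
  obtain ⟨l, hl0, i0, hi0⟩ := Fintype.not_linearIndependent_iff.mp hdep
  -- abbreviations
  set s : Fin (d+1) → ℝ := fun i => r 0 + r i.succ with hs
  have hrne : ∀ i : Fin (d+2), r i ≠ 0 := fun i => (hr i).ne'
  have hnorm : ∀ i : Fin (d+1), ‖p i‖ = s i := by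
    intro i
    have h1 := htan i.succ 0 (Fin.succ_ne_zero i)
    rw [dist_eq_norm] at h1
    rw [hp, hs]
    simp only
    rw [h1]; ring
  have hinner : ∀ i j : Fin (d+1),
      ⟪p i, p j⟫ = s i * s j - 2 * r i.succ * r j.succ
        + (if i = j then 2 * r j.succ ^ 2 else 0) := by
    intro i j
    by_cases h : i = j
    · subst h
      rw [if_pos rfl, real_inner_self_eq_norm_sq, hnorm]
      ring
    · simp only [if_neg h, add_zero]
      have h1 : ‖p i - p j‖ = r i.succ + r j.succ := by
        have h2 := htan i.succ j.succ (by simpa using h)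
        rw [dist_eq_norm] at h2
        rw [hp]
        simpa using h2
      have h3 := norm_sub_sq_real (p i) (p j)
      rw [h1, hnorm, hnorm] at h3
      have hsi : s i = r 0 + r i.succ := rfl
      have hsj : s j = r 0 + r j.succ := rfl
      rw [hsi, hsj] at h3 ⊢
      linear_combination h3 / 2
  -- Gram relations
  set P : ℝ := ∑ i, l i * s i with hP
  set Q : ℝ := ∑ i, l i * r i.succ with hQ
  have hzero : ∑ i, l i • p i = 0 := hl0
  have key : ∀ j : Fin (d+1),
      P * s j - 2 * Q * r j.succ + 2 * l j * r j.succ ^ 2 = 0 := by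
    intro j
    have h1 : ⟪∑ i, l i • p i, p j⟫ = (0:ℝ) := by rw [hzero]; simp
    rw [sum_inner] at h1
    simp only [real_inner_smul_left] at h1
    have h2 : ∑ i, l i * ⟪p i, p j⟫
        = ∑ i, (l i * s i * s j - 2 * (l i * r i.succ) * r j.succ
            + (if i = j then l i * (2 * r j.succ ^ 2) else 0)) := by
      refine Finset.sum_congr rfl fun i _ => ?_
      rw [hinner i j]
      by_cases h : i = j
      · subst h; simp; ring
      · simp [h]; ring
    rw [h2] at h1
    rw [Finset.sum_add_distrib, Finset.sum_sub_distrib, Finset.sum_ite_eq' univ j] at h1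
    simp only [mem_univ, if_pos] at h1
    rw [← Finset.sum_mul, ← Finset.sum_mul] at h1
    rw [hP, hQ]
    have : (∑ i, l i * s i) * s j - (∑ i, 2 * (l i * r i.succ)) * r j.succ
        + l j * (2 * r j.succ ^ 2) = 0 := h1
    rw [show (∑ i, 2 * (l i * r i.succ)) = 2 * ∑ i, l i * r i.succ by
      rw [Finset.mul_sum]] at this
    linarith [this]
  -- solve for l j
  have hl : ∀ j : Fin (d+1),
      l j = Q / r j.succ - P * s j / (2 * r j.succ ^ 2) := by
    intro j
    have h1 := key j
    have h2 := hrne j.succ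
    field_simp
    linear_combination h1
  -- u j = s j / r j.succ
  set u : Fin (d+1) → ℝ := fun j => s j / r j.succ with hu
  set U1 : ℝ := ∑ j, u j with hU1
  set U2 : ℝ := ∑ j, u j ^ 2 with hU2
  have e1 : ∀ j : Fin (d+1), l j * r j.succ = Q - P / 2 * u j := by
    intro j
    rw [hl j, hu]
    have h2 := hrne j.succ
    field_simp
  have e2 : ∀ j : Fin (d+1), l j * s j = Q * u j - P / 2 * u j ^ 2 := by
    intro j
    rw [hl j, hu]
    have h2 := hrne j.succ
    field_simp
  have EqA : (d:ℝ) * Q - P / 2 * U1 = 0 := by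
    have h1 : Q = ∑ j, (Q - P / 2 * u j) := by
      rw [hQ]
      exact Finset.sum_congr rfl fun j _ => e1 j
    rw [Finset.sum_sub_distrib, Finset.sum_const, ← Finset.mul_sum] at h1
    simp only [card_univ, Fintype.card_fin, nsmul_eq_mul] at h1
    rw [hU1]
    push_cast at h1 ⊢
    linarith [h1]
  have EqB : P - Q * U1 + P / 2 * U2 = 0 := by
    have h1 : P = ∑ j, (Q * u j - P / 2 * u j ^ 2) := by
      rw [hP]
      exact Finset.sum_congr rfl fun j _ => e2 j
    rw [Finset.sum_sub_distrib, ← Finset.mul_sum, ← Finset.mul_sum] at h1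
    rw [hU1, hU2]
    linarith [h1]
  have hPne : P ≠ 0 := by
    intro hP0
    have hd' : (d:ℝ) ≠ 0 := by positivity
    have hQ0 : Q = 0 := by
      rw [hP0] at EqA
      have h3 : (d:ℝ) * Q = 0 := by linarith [EqA]
      rcases mul_eq_zero.mp h3 with h | h
      · exact absurd h hd'
      · exact h
    apply hi0
    rw [hl i0, hP0, hQ0]
    simp
  have key2 : U1 ^ 2 = 2 * d + d * U2 := by
    have h0 : P * (U1 ^ 2 - 2 * d - d * U2) = 0 := by
      linear_combination (-2 * U1) * EqA + (-2 * (d:ℝ)) * EqB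
    rcases mul_eq_zero.mp h0 with h | h
    · exact absurd h hPne
    · linarith [h]
  -- final algebra
  have hgoal : (1 / r 0 + ∑ j : Fin (d+1), 1 / r j.succ) ^ 2
      = d * ((1 / r 0) ^ 2 + ∑ j : Fin (d+1), (1 / r j.succ) ^ 2) := by
    set B : ℝ := ∑ j : Fin (d+1), 1 / r j.succ with hB
    set C : ℝ := ∑ j : Fin (d+1), (1 / r j.succ) ^ 2 with hC
    have hU1v : U1 = r 0 * B + (d + 1) := by
      rw [hU1, hB, Finset.mul_sum]
      rw [show ((d:ℝ) + 1) = ∑ _j : Fin (d+1), (1:ℝ) by simp]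
      rw [← Finset.sum_add_distrib]
      refine Finset.sum_congr rfl fun j _ => ?_
      have h1 : u j = s j / r j.succ := rfl
      have h2 : s j = r 0 + r j.succ := rfl
      rw [h1, h2]
      have := hrne j.succ
      field_simp
    have hU2v : U2 = r 0 ^ 2 * C + 2 * r 0 * B + (d + 1) := by
      rw [hU2, hC, hB, Finset.mul_sum, Finset.mul_sum]
      rw [show ((d:ℝ) + 1) = ∑ _j : Fin (d+1), (1:ℝ) by simp]
      rw [← Finset.sum_add_distrib, ← Finset.sum_add_distrib]
      refine Finset.sum_congr rfl fun j _ => ?_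
      have h1 : u j = s j / r j.succ := rfl
      have h2 : s j = r 0 + r j.succ := rfl
      rw [h1, h2]
      have := hrne j.succ
      field_simp
      ring
    rw [hU1v, hU2v] at key2
    have hr0 := hrne 0
    field_simp
    linear_combination key2
  rw [show (∑ i : Fin (d+2), 1 / r i) = 1 / r 0 + ∑ j : Fin (d+1), 1 / r j.succ
      from Fin.sum_univ_succ _,
    show (∑ i : Fin (d+2), (1 / r i) ^ 2) = (1 / r 0) ^ 2 + ∑ j : Fin (d+1), (1 / r j.succ) ^ 2
      from Fin.sum_univ_succ _]
  exact hgoal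
end

section
/- (MDA satisfies (1 + 2t/(n−t))-MEB validity.) Let n > 2t and v : Fin n → EuclideanSpace ℝ (Fin d). Let H ⊆ Fin n with |H| ≥ n − t and suppose v i ∈ closedBall(C*, r*) for all i ∈ H, where r* ≥ 0. Let M ⊆ Fin n with |M| = n − t be a subset minimizing the diameter D_M = max_{i,j ∈ M} ‖v i − v j‖₂ among all subsets of size n − t. Then the MDA output, the average (1/(n−t)) ∑_{i ∈ M} v i, satisfies ‖(1/(n−t)) ∑_{i ∈ M} v i − C*‖₂ ≤ (1 + 2t/(n−t)) · r*. -/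
/-- MDA satisfies `(1 + 2t/(n-t))`-MEB validity: if all honest points (an index set `H`
with `|H| ≥ n - t`) lie in `closedBall C* r*` and `M` is an `(n-t)`-subset of minimum
diameter `max_{i,j ∈ M} ‖v i - v j‖`, then the average of `v` over `M` is within
distance `(1 + 2t/(n-t))·r*` of `C*`. -/
theorem mda_meb_validity (d n t : ℕ) (hn : n > 2 * t)
    (v : Fin n → EuclideanSpace ℝ (Fin d))
    (H : Finset (Fin n)) (hH : n - t ≤ H.card)
    (Cstar : EuclideanSpace ℝ (Fin d)) (rstar : ℝ) (hr : 0 ≤ rstar)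
    (hball : ∀ i ∈ H, v i ∈ Metric.closedBall Cstar rstar)
    (M : Finset (Fin n)) (hM : M.card = n - t)
    (hmin : ∀ M' : Finset (Fin n), M'.card = n - t →
      Metric.diam (v '' (M : Set (Fin n))) ≤ Metric.diam (v '' (M' : Set (Fin n)))) :
    ‖((n : ℝ) - t)⁻¹ • (∑ i ∈ M, v i) - Cstar‖ ≤ (1 + 2 * t / ((n : ℝ) - t)) * rstar := by
  have htn : t ≤ n := by omega
  have hc : (0:ℝ) < (n:ℝ) - t := by
    have : (t:ℝ) < (n:ℝ) := by exact_mod_cast (by omega : t < n)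
    linarith
  have hcast : ((n - t : ℕ) : ℝ) = (n:ℝ) - t := by
    rw [Nat.cast_sub htn]
  -- a subset of H of size n - t
  obtain ⟨M', hM'H, hM'card⟩ := Finset.exists_subset_card_eq hH
  -- diameter of v(M') is at most 2 r*
  have hdiamM' : Metric.diam (v '' (M' : Set (Fin n))) ≤ 2 * rstar := by
    apply Metric.diam_le_of_forall_dist_le (by positivity)
    rintro x ⟨i, hi, rfl⟩ y ⟨j, hj, rfl⟩
    have hxi := hball i (hM'H hi)
    have hxj := hball j (hM'H hj)
    rw [Metric.mem_closedBall] at hxi hxj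
    calc dist (v i) (v j) ≤ dist (v i) Cstar + dist Cstar (v j) := dist_triangle _ _ _
      _ ≤ rstar + rstar := by
          have := (dist_comm Cstar (v j)) ▸ hxj
          linarith
      _ = 2 * rstar := by ring
  have hdiamM : Metric.diam (v '' (M : Set (Fin n))) ≤ 2 * rstar :=
    le_trans (hmin M' hM'card) hdiamM'
  have hbnd : Bornology.IsBounded (v '' (M : Set (Fin n))) :=
    (M.finite_toSet.image v).isBounded
  -- M ∩ H nonempty
  have hinter : (M ∩ H).Nonempty := by
    rw [← Finset.card_pos]
    have h1 := Finset.card_union_add_card_inter M H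
    have h2 : (M ∪ H).card ≤ n := by
      calc (M ∪ H).card ≤ Fintype.card (Fin n) := Finset.card_le_univ _
        _ = n := Fintype.card_fin n
    omega
  obtain ⟨w, hw⟩ := hinter
  rw [Finset.mem_inter] at hw
  have hwball := hball w hw.2
  rw [Metric.mem_closedBall] at hwball
  -- pointwise bounds
  have hgood : ∀ i ∈ M ∩ H, ‖v i - Cstar‖ ≤ rstar := by
    intro i hi
    rw [Finset.mem_inter] at hi
    have := hball i hi.2
    rw [Metric.mem_closedBall, dist_eq_norm] at this
    exact this
  have hbad : ∀ i ∈ M \ H, ‖v i - Cstar‖ ≤ 3 * rstar := by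
    intro i hi
    rw [Finset.mem_sdiff] at hi
    have hdw : dist (v i) (v w) ≤ 2 * rstar :=
      le_trans (Metric.dist_le_diam_of_mem hbnd ⟨i, hi.1, rfl⟩ ⟨w, hw.1, rfl⟩) hdiamM
    calc ‖v i - Cstar‖ = dist (v i) Cstar := (dist_eq_norm _ _).symm
      _ ≤ dist (v i) (v w) + dist (v w) Cstar := dist_triangle _ _ _
      _ ≤ 2 * rstar + rstar := add_le_add hdw hwball
      _ = 3 * rstar := by ring
  -- cardinality bounds
  have hcard1 : (M ∩ H).card ≤ n - t := by
    rw [← hM]; exact Finset.card_le_card (Finset.inter_subset_left)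
  have hcard2 : (M \ H).card ≤ t := by
    have h1 : (M \ H).card ≤ (Finset.univ \ H).card :=
      Finset.card_le_card (Finset.sdiff_subset_sdiff (Finset.subset_univ _) le_rfl)
    have h2 : (Finset.univ \ H).card = n - H.card := by
      rw [Finset.card_sdiff_of_subset (Finset.subset_univ _), Finset.card_univ, Fintype.card_fin]
    omega
  -- sum bound
  have habn : (M ∩ H).card + (M \ H).card = n - t := by
    rw [Finset.card_inter_add_card_sdiff, hM]
  have hsum : ∑ i ∈ M, ‖v i - Cstar‖ ≤ ((n:ℝ) - t) * rstar + 2 * t * rstar := by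
    rw [← Finset.sum_inter_add_sum_sdiff M H fun i => ‖v i - Cstar‖]
    have b1 : ∑ i ∈ M ∩ H, ‖v i - Cstar‖ ≤ ((M ∩ H).card : ℝ) * rstar := by
      calc ∑ i ∈ M ∩ H, ‖v i - Cstar‖ ≤ (M ∩ H).card • rstar :=
            Finset.sum_le_card_nsmul _ _ _ hgood
        _ = ((M ∩ H).card : ℝ) * rstar := by rw [nsmul_eq_mul]
    have b2 : ∑ i ∈ M \ H, ‖v i - Cstar‖ ≤ ((M \ H).card : ℝ) * (3 * rstar) := by
      calc ∑ i ∈ M \ H, ‖v i - Cstar‖ ≤ (M \ H).card • (3 * rstar) :=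
            Finset.sum_le_card_nsmul _ _ _ hbad
        _ = ((M \ H).card : ℝ) * (3 * rstar) := by rw [nsmul_eq_mul]
    have hab : ((M ∩ H).card : ℝ) + ((M \ H).card : ℝ) = (n:ℝ) - t := by
      rw [← hcast]; exact_mod_cast habn
    have hb : ((M \ H).card : ℝ) ≤ (t : ℝ) := by exact_mod_cast hcard2
    nlinarith [hr]
  -- assemble
  have hrw : ((n : ℝ) - t)⁻¹ • (∑ i ∈ M, v i) - Cstar
      = ((n:ℝ) - t)⁻¹ • ((∑ i ∈ M, v i) - ((n:ℝ) - t) • Cstar) := by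
    rw [smul_sub, inv_smul_smul₀ hc.ne']
  have hdist : (∑ i ∈ M, v i) - ((n:ℝ) - t) • Cstar = ∑ i ∈ M, (v i - Cstar) := by
    rw [Finset.sum_sub_distrib, Finset.sum_const, hM, ← hcast,
      ← Nat.cast_smul_eq_nsmul ℝ]
  rw [hrw, hdist, norm_smul, Real.norm_eq_abs, abs_of_pos (inv_pos.2 hc)]
  have hnorm : ‖∑ i ∈ M, (v i - Cstar)‖ ≤ ((n:ℝ) - t) * rstar + 2 * t * rstar :=
    le_trans (norm_sum_le _ _) hsum
  calc ((n:ℝ) - t)⁻¹ * ‖∑ i ∈ M, (v i - Cstar)‖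
      ≤ ((n:ℝ) - t)⁻¹ * (((n:ℝ) - t) * rstar + 2 * t * rstar) :=
        mul_le_mul_of_nonneg_left hnorm (inv_pos.2 hc).le
    _ = (1 + 2 * t / ((n : ℝ) - t)) * rstar := by field_simp
end

section
/- (Medoid satisfies (3n−2t)/(n−2t)-MEB validity.) Let n > 2t and v : Fin n → EuclideanSpace ℝ (Fin d). Let H ⊆ Fin n with |H| ≥ n − t and suppose v i ∈ closedBall(C*, r*) for all i ∈ H, where r* ≥ 0. Let i₀ ∈ Fin n minimize ∑_{j ∈ Fin n} ‖v i − v j‖₂ over all i ∈ Fin n (so m = v i₀ is a medoid of the inputs). Then ‖m − C*‖₂ ≤ ((3n−2t)/(n−2t)) · r*. -/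
/-!
Compare the total distance from the medoid `m` with that from an honest point `y`, term by
term. Against an honest `v j`, moving from `m` to `y` saves at least `‖m - C*‖ - 3 r*` (as `v j`
is within `r*` of `C*` and `y` within `2 r*` of `v j`); against any other `v j` it costs at most
`‖m - y‖ ≤ ‖m - C*‖ + r*`. Minimality of `m` makes the total change nonnegative, and with at
least `n - t` honest terms this bounds `‖m - C*‖`.
-/

open Finset Metric

section

variable {α : Type*} [PseudoMetricSpace α]

lemma dist_sub_dist_le_of_mem_closedBall {c y : α} {r : ℝ} (hy : y ∈ closedBall c r)
    (x z : α) : dist y z - dist x z ≤ dist x c + r := by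
  have hyc := mem_closedBall.mp hy
  linarith [dist_triangle y x z, dist_triangle x c y, dist_comm x y, dist_comm c y]

lemma dist_sub_dist_le_of_mem_closedBall_of_mem_closedBall {c y z : α} {r : ℝ}
    (hy : y ∈ closedBall c r) (hz : z ∈ closedBall c r) (x : α) :
    dist y z - dist x z ≤ 3 * r - dist x c := by
  have hyc := mem_closedBall.mp hy
  have hzc := mem_closedBall.mp hz
  linarith [dist_triangle y c z, dist_triangle x z c, dist_comm c y, dist_comm z c]

theorem mul_dist_center_le_of_sum_dist_le {ι : Type*} [Fintype ι] [DecidableEq ι] (v : ι → α)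
    (H : Finset ι) {c x y : α} {r : ℝ} (hball : ∀ i ∈ H, v i ∈ closedBall c r)
    (hy : y ∈ closedBall c r)
    (hmin : ∑ j, dist x (v j) ≤ ∑ j, dist y (v j)) :
    (2 * #H - Fintype.card ι) * dist x c ≤ (Fintype.card ι + 2 * #H) * r := by
  have hcompl : (#Hᶜ : ℝ) = Fintype.card ι - #H := by
    rw [card_compl, Nat.cast_sub (card_le_univ H)]
  have hgain : ∑ j ∈ H, (dist y (v j) - dist x (v j)) ≤ #H * (3 * r - dist x c) := by
    simpa only [nsmul_eq_mul] using sum_le_card_nsmul H _ _ fun j hj =>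
      dist_sub_dist_le_of_mem_closedBall_of_mem_closedBall hy (hball j hj) x
  have hloss : ∑ j ∈ Hᶜ, (dist y (v j) - dist x (v j)) ≤ #Hᶜ * (dist x c + r) := by
    simpa only [nsmul_eq_mul] using sum_le_card_nsmul Hᶜ _ _ fun j _ =>
      dist_sub_dist_le_of_mem_closedBall hy x (v j)
  have htotal : 0 ≤ ∑ j, (dist y (v j) - dist x (v j)) := by
    rw [sum_sub_distrib]
    linarith
  rw [← sum_add_sum_compl H] at htotal
  rw [hcompl] at hloss
  linarith

end

lemma le_div_mul_of_mul_le {n t h D r : ℝ} (ht : 0 ≤ t) (hnt : 0 < n - 2 * t) (hh : n - t ≤ h)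
    (hr : 0 ≤ r) (hD : (2 * h - n) * D ≤ (n + 2 * h) * r) :
    D ≤ (3 * n - 2 * t) / (n - 2 * t) * r := by
  have hpos : 0 < 2 * h - n := by linarith
  rw [div_mul_eq_mul_div, le_div_iff₀ hnt]
  -- `(n + 2h) / (2h - n)` decreases in `h`, so it is largest at `h = n - t`.
  have hratio : (n - 2 * t) * (n + 2 * h) * r ≤ (3 * n - 2 * t) * (2 * h - n) * r := by
    apply mul_le_mul_of_nonneg_right _ hr
    nlinarith [mul_nonneg (by linarith : 0 ≤ n) (sub_nonneg.mpr hh)]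
  nlinarith [mul_le_mul_of_nonneg_left hD hnt.le]

theorem medoid_meb_validity_general (d n t : ℕ) (hn : n > 2 * t)
    (v : Fin n → EuclideanSpace ℝ (Fin d))
    (H : Finset (Fin n)) (hH : n - t ≤ H.card)
    (Cstar : EuclideanSpace ℝ (Fin d)) (rstar : ℝ)
    (hball : ∀ i ∈ H, v i ∈ Metric.closedBall Cstar rstar)
    (i₀ : Fin n)
    (hmed : ∀ i : Fin n, ∑ j, ‖v i₀ - v j‖ ≤ ∑ j, ‖v i - v j‖) :
    ‖v i₀ - Cstar‖ ≤ ((3 * (n : ℝ) - 2 * t) / ((n : ℝ) - 2 * t)) * rstar := by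
  obtain ⟨s, hs⟩ : H.Nonempty := card_pos.mp (by omega)
  have hr : 0 ≤ rstar := dist_nonneg.trans (mem_closedBall.mp (hball s hs))
  have hbound := mul_dist_center_le_of_sum_dist_le v H hball (hball s hs)
    (by simpa only [dist_eq_norm] using hmed s)
  rw [Fintype.card_fin] at hbound
  have hnt : (0 : ℝ) < n - 2 * t := by
    have : (2 * t : ℝ) < n := by exact_mod_cast hn
    linarith
  have hh : (n : ℝ) - t ≤ #H := by
    have : (n : ℝ) ≤ #H + t := by exact_mod_cast (by omega : n ≤ #H + t)
    linarith
  rw [← dist_eq_norm]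
  exact le_div_mul_of_mul_le t.cast_nonneg hnt hh hr hbound

/-- The medoid satisfies `(3n-2t)/(n-2t)`-MEB validity: if all honest points (an index
set `H` with `|H| ≥ n - t`) lie in `closedBall C* r*` and `i₀` minimizes the sum of
Euclidean distances to all input points, then `‖v i₀ - C*‖ ≤ ((3n-2t)/(n-2t))·r*`. -/
theorem medoid_meb_validity (d n t : ℕ) (hn : n > 2 * t)
    (v : Fin n → EuclideanSpace ℝ (Fin d))
    (H : Finset (Fin n)) (hH : n - t ≤ H.card)
    (Cstar : EuclideanSpace ℝ (Fin d)) (rstar : ℝ) (hr : 0 ≤ rstar)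
    (hball : ∀ i ∈ H, v i ∈ Metric.closedBall Cstar rstar)
    (i₀ : Fin n)
    (hmed : ∀ i : Fin n, ∑ j, ‖v i₀ - v j‖ ≤ ∑ j, ‖v i - v j‖) :
    ‖v i₀ - Cstar‖ ≤ ((3 * (n : ℝ) - 2 * t) / ((n : ℝ) - 2 * t)) * rstar :=
  medoid_meb_validity_general d n t hn v H hH Cstar rstar hball i₀ hmed
end

section
/- (Medoid cannot satisfy c-MEB validity for c ≤ 2.) Let t ≥ 12 be an even natural number and n = 2t + 1. Consider the family v : Fin n → ℝ² consisting of: t/2 − 1 copies of (0,0); t/2 copies of (1,1); t/2 copies of (3,1); 2 copies of (2,0); t/2 − 1 copies of (4,0); and 1 copy of (2,10). Then every medoid m of this family (i.e., every v i₀ with i₀ minimizing ∑_j ‖v i − v j‖₂) equals (1,1) or (3,1), and in either case there exist a center C ∈ {(1,0),(3,0)} and a subset H ⊆ Fin n with |H| = t + 1 = n − t such that v i ∈ closedBall(C, 1) for all i ∈ H and ‖m − C‖₂ = √5 > 2·1. Hence the medoid violates c-MEB validity for every c ≤ 2. -/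
set_option maxHeartbeats 1000000


/-- The paper's counterexample input family in `ℝ²` for `n = 2t + 1` nodes (`t` even):
`t/2 - 1` copies of `(0,0)`, `t/2` copies of `(1,1)`, `t/2` copies of `(3,1)`,
`2` copies of `(2,0)`, `t/2 - 1` copies of `(4,0)`, and one copy of `(2,10)`. -/
noncomputable def medoidCounterexample (t : ℕ) : Fin (2 * t + 1) → EuclideanSpace ℝ (Fin 2) :=
  fun i =>
    if (i : ℕ) < t / 2 - 1 then !₂[0, 0]
    else if (i : ℕ) < t - 1 then !₂[1, 1]
    else if (i : ℕ) < 3 * t / 2 - 1 then !₂[3, 1]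
    else if (i : ℕ) < 3 * t / 2 + 1 then !₂[2, 0]
    else if (i : ℕ) < 2 * t then !₂[4, 0]
    else !₂[2, 10]

private lemma norm_sub_eq (x y : EuclideanSpace ℝ (Fin 2)) :
    ‖x - y‖ = Real.sqrt ((x 0 - y 0)^2 + (x 1 - y 1)^2) := by
  rw [EuclideanSpace.norm_eq, Fin.sum_univ_two]
  congr 1 <;> simp [sq_abs]

private lemma npair {x y : EuclideanSpace ℝ (Fin 2)} {a b c d : ℝ}
    (hx : x = !₂[a,b]) (hy : y = !₂[c,d]) (v : ℝ) (h : (a-c)^2 + (b-d)^2 = v) :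
    ‖x - y‖ = Real.sqrt v := by
  rw [norm_sub_eq, hx, hy]
  norm_num [h]

private lemma npair' {x y : EuclideanSpace ℝ (Fin 2)} {a b c d : ℝ}
    (hx : x = !₂[a,b]) (hy : y = !₂[c,d]) (v : ℝ) (hv : 0 ≤ v)
    (h : (a-c)^2 + (b-d)^2 = v^2) :
    ‖x - y‖ = v := by
  rw [npair hx hy _ h, Real.sqrt_sq hv]

private lemma sqrt_lb (a b : ℝ) (ha : 0 ≤ a) (h : a^2 ≤ b) : a ≤ Real.sqrt b := by
  nlinarith [Real.sq_sqrt (le_trans (by positivity) h), Real.sqrt_nonneg b]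

private lemma sqrt_ub (a b : ℝ) (ha : 0 ≤ a) (h : b ≤ a^2) : Real.sqrt b ≤ a :=
  le_trans (Real.sqrt_le_sqrt h) (by rw [Real.sqrt_sq ha])

private noncomputable def ptA : EuclideanSpace ℝ (Fin 2) := !₂[0,0]
private noncomputable def ptB : EuclideanSpace ℝ (Fin 2) := !₂[1,1]
private noncomputable def ptC : EuclideanSpace ℝ (Fin 2) := !₂[3,1]
private noncomputable def ptD : EuclideanSpace ℝ (Fin 2) := !₂[2,0]
private noncomputable def ptE : EuclideanSpace ℝ (Fin 2) := !₂[4,0]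
private noncomputable def ptF : EuclideanSpace ℝ (Fin 2) := !₂[2,10]

private lemma mc_val (t s : ℕ) (hts : t = 2*s) (i : Fin (2*t+1)) :
    medoidCounterexample t i =
      if (i:ℕ) < s-1 then ptA
      else if (i:ℕ) < 2*s-1 then ptB
      else if (i:ℕ) < 3*s-1 then ptC
      else if (i:ℕ) < 3*s+1 then ptD
      else if (i:ℕ) < 4*s then ptE
      else ptF := by
  subst hts
  have e1 : 2*s/2 - 1 = s - 1 := by omega
  have e3 : 3*(2*s)/2 - 1 = 3*s - 1 := by omega
  have e4 : 3*(2*s)/2 + 1 = 3*s + 1 := by omega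
  have e5 : 2*(2*s) = 4*s := by ring
  simp only [medoidCounterexample, e1, e3, e4, e5, ptA, ptB, ptC, ptD, ptE, ptF]

private lemma sum_Ico_const {g : ℕ → ℝ} {lo hi : ℕ} {c : ℝ}
    (h : ∀ k, lo ≤ k → k < hi → g k = c) :
    ∑ i ∈ Finset.Ico lo hi, g i = (hi - lo : ℕ) * c := by
  rw [Finset.sum_congr rfl fun i hi' => h i (Finset.mem_Ico.mp hi').1 (Finset.mem_Ico.mp hi').2,
    Finset.sum_const, Nat.card_Ico, nsmul_eq_mul]

private lemma sum_eq (t s : ℕ) (hts : t = 2*s) (hs : 6 ≤ s)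
    (p : EuclideanSpace ℝ (Fin 2)) :
    ∑ j : Fin (2*t+1), ‖p - medoidCounterexample t j‖ =
      ((s:ℝ)-1) * ‖p - ptA‖ + s * ‖p - ptB‖ + s * ‖p - ptC‖
        + 2 * ‖p - ptD‖ + ((s:ℝ)-1) * ‖p - ptE‖ + ‖p - ptF‖ := by
  have key : ∀ j : Fin (2*t+1), ‖p - medoidCounterexample t j‖ =
      (fun k : ℕ => if k < s-1 then ‖p - ptA‖ else if k < 2*s-1 then ‖p - ptB‖
        else if k < 3*s-1 then ‖p - ptC‖ else if k < 3*s+1 then ‖p - ptD‖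
        else if k < 4*s then ‖p - ptE‖ else ‖p - ptF‖) (j:ℕ) := by
    intro j
    beta_reduce
    rw [mc_val t s hts j]
    split_ifs <;> rfl
  rw [Finset.sum_congr rfl fun j _ => key j,
    Fin.sum_univ_eq_sum_range (fun k : ℕ => if k < s-1 then ‖p - ptA‖ else if k < 2*s-1 then ‖p - ptB‖
        else if k < 3*s-1 then ‖p - ptC‖ else if k < 3*s+1 then ‖p - ptD‖
        else if k < 4*s then ‖p - ptE‖ else ‖p - ptF‖) (2*t+1)]
  have h1 : 2*t+1 = 4*s+1 := by omega
  rw [h1, Finset.range_eq_Ico]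
  rw [← Finset.sum_Ico_consecutive _ (show 0 ≤ s-1 by omega) (show s-1 ≤ 4*s+1 by omega)]
  rw [← Finset.sum_Ico_consecutive _ (show s-1 ≤ 2*s-1 by omega) (show 2*s-1 ≤ 4*s+1 by omega)]
  rw [← Finset.sum_Ico_consecutive _ (show 2*s-1 ≤ 3*s-1 by omega) (show 3*s-1 ≤ 4*s+1 by omega)]
  rw [← Finset.sum_Ico_consecutive _ (show 3*s-1 ≤ 3*s+1 by omega) (show 3*s+1 ≤ 4*s+1 by omega)]
  rw [← Finset.sum_Ico_consecutive _ (show 3*s+1 ≤ 4*s by omega) (show 4*s ≤ 4*s+1 by omega)]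
  rw [sum_Ico_const (c := ‖p - ptA‖) (fun k h1 h2 => by rw [if_pos (by omega)]),
      sum_Ico_const (c := ‖p - ptB‖) (fun k h1 h2 => by rw [if_neg (by omega), if_pos (by omega)]),
      sum_Ico_const (c := ‖p - ptC‖) (fun k h1 h2 => by
        rw [if_neg (by omega), if_neg (by omega), if_pos (by omega)]),
      sum_Ico_const (c := ‖p - ptD‖) (fun k h1 h2 => by
        rw [if_neg (by omega), if_neg (by omega), if_neg (by omega), if_pos (by omega)]),
      sum_Ico_const (c := ‖p - ptE‖) (fun k h1 h2 => by
        rw [if_neg (by omega), if_neg (by omega), if_neg (by omega), if_neg (by omega),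
          if_pos (by omega)]),
      sum_Ico_const (c := ‖p - ptF‖) (fun k h1 h2 => by
        rw [if_neg (by omega), if_neg (by omega), if_neg (by omega), if_neg (by omega),
          if_neg (by omega)])]
  have c1 : s - 1 - 0 = s - 1 := by omega
  have c2 : 2*s-1 - (s-1) = s := by omega
  have c3 : 3*s-1 - (2*s-1) = s := by omega
  have c4 : 3*s+1 - (3*s-1) = 2 := by omega
  have c5 : 4*s - (3*s+1) = s - 1 := by omega
  have c6 : 4*s+1 - 4*s = 1 := by omega
  rw [c1, c2, c3, c4, c5, c6, Nat.cast_sub (by omega : 1 ≤ s)]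
  push_cast
  ring

/-- The medoid cannot satisfy `c`-MEB validity for `c ≤ 2`: in the counterexample
configuration every medoid equals `(1,1)` or `(3,1)`, yet there is a candidate honest
set of `n - t = t + 1` points contained in a closed unit ball whose center is at
distance `√5 > 2·1` from the medoid. -/
theorem medoid_not_c_meb_valid_for_c_le_two (t : ℕ) (ht : 12 ≤ t) (htev : Even t)
    (i₀ : Fin (2 * t + 1))
    (hmed : ∀ i : Fin (2 * t + 1),
      ∑ j, ‖medoidCounterexample t i₀ - medoidCounterexample t j‖ ≤
        ∑ j, ‖medoidCounterexample t i - medoidCounterexample t j‖) :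
    (medoidCounterexample t i₀ = !₂[1, 1] ∨ medoidCounterexample t i₀ = !₂[3, 1]) ∧
    ∃ C ∈ ({!₂[1, 0], !₂[3, 0]} : Set (EuclideanSpace ℝ (Fin 2))),
      ∃ H : Finset (Fin (2 * t + 1)), H.card = t + 1 ∧
        (∀ i ∈ H, medoidCounterexample t i ∈ Metric.closedBall C 1) ∧
        ‖medoidCounterexample t i₀ - C‖ = Real.sqrt 5 ∧ (2 : ℝ) * 1 < Real.sqrt 5 := by
  obtain ⟨r, hr⟩ := htev
  have hts : t = 2*r := by omega
  have hs : 6 ≤ r := by omega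
  have hσ : (6:ℝ) ≤ (r:ℝ) := by exact_mod_cast hs
  -- square root bounds
  have b2l : (1.414:ℝ) ≤ Real.sqrt 2 := sqrt_lb _ _ (by norm_num) (by norm_num)
  have b2u : Real.sqrt 2 ≤ 1.415 := sqrt_ub _ _ (by norm_num) (by norm_num)
  have b10l : (3.162:ℝ) ≤ Real.sqrt 10 := sqrt_lb _ _ (by norm_num) (by norm_num)
  have b10u : Real.sqrt 10 ≤ 3.163 := sqrt_ub _ _ (by norm_num) (by norm_num)
  have b82l : (9.05:ℝ) ≤ Real.sqrt 82 := sqrt_lb _ _ (by norm_num) (by norm_num)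
  have b82u : Real.sqrt 82 ≤ 9.056 := sqrt_ub _ _ (by norm_num) (by norm_num)
  have b104l : (10.1:ℝ) ≤ Real.sqrt 104 := sqrt_lb _ _ (by norm_num) (by norm_num)
  have b104u : Real.sqrt 104 ≤ 10.2 := sqrt_ub _ _ (by norm_num) (by norm_num)
  have b5 : (2:ℝ)*1 < Real.sqrt 5 := by
    have := sqrt_lb 2.2 5 (by norm_num) (by norm_num); linarith
  -- distances
  have nAA : ‖ptA - ptA‖ = (0:ℝ) := by simp
  have nAB : ‖ptA - ptB‖ = Real.sqrt 2 := npair rfl rfl 2 (by norm_num)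
  have nAC : ‖ptA - ptC‖ = Real.sqrt 10 := npair rfl rfl 10 (by norm_num)
  have nAD : ‖ptA - ptD‖ = (2:ℝ) := npair' rfl rfl 2 (by norm_num) (by norm_num)
  have nAE : ‖ptA - ptE‖ = (4:ℝ) := npair' rfl rfl 4 (by norm_num) (by norm_num)
  have nAF : ‖ptA - ptF‖ = Real.sqrt 104 := npair rfl rfl 104 (by norm_num)
  have nBA : ‖ptB - ptA‖ = Real.sqrt 2 := npair rfl rfl 2 (by norm_num)
  have nBB : ‖ptB - ptB‖ = (0:ℝ) := by simp
  have nBC : ‖ptB - ptC‖ = (2:ℝ) := npair' rfl rfl 2 (by norm_num) (by norm_num)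
  have nBD : ‖ptB - ptD‖ = Real.sqrt 2 := npair rfl rfl 2 (by norm_num)
  have nBE : ‖ptB - ptE‖ = Real.sqrt 10 := npair rfl rfl 10 (by norm_num)
  have nBF : ‖ptB - ptF‖ = Real.sqrt 82 := npair rfl rfl 82 (by norm_num)
  have nDA : ‖ptD - ptA‖ = (2:ℝ) := npair' rfl rfl 2 (by norm_num) (by norm_num)
  have nDB : ‖ptD - ptB‖ = Real.sqrt 2 := npair rfl rfl 2 (by norm_num)
  have nDC : ‖ptD - ptC‖ = Real.sqrt 2 := npair rfl rfl 2 (by norm_num)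
  have nDD : ‖ptD - ptD‖ = (0:ℝ) := by simp
  have nDE : ‖ptD - ptE‖ = (2:ℝ) := npair' rfl rfl 2 (by norm_num) (by norm_num)
  have nDF : ‖ptD - ptF‖ = (10:ℝ) := npair' rfl rfl 10 (by norm_num) (by norm_num)
  have nEA : ‖ptE - ptA‖ = (4:ℝ) := npair' rfl rfl 4 (by norm_num) (by norm_num)
  have nEB : ‖ptE - ptB‖ = Real.sqrt 10 := npair rfl rfl 10 (by norm_num)
  have nEC : ‖ptE - ptC‖ = Real.sqrt 2 := npair rfl rfl 2 (by norm_num)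
  have nED : ‖ptE - ptD‖ = (2:ℝ) := npair' rfl rfl 2 (by norm_num) (by norm_num)
  have nEE : ‖ptE - ptE‖ = (0:ℝ) := by simp
  have nEF : ‖ptE - ptF‖ = Real.sqrt 104 := npair rfl rfl 104 (by norm_num)
  have nFA : ‖ptF - ptA‖ = Real.sqrt 104 := npair rfl rfl 104 (by norm_num)
  have nFB : ‖ptF - ptB‖ = Real.sqrt 82 := npair rfl rfl 82 (by norm_num)
  have nFC : ‖ptF - ptC‖ = Real.sqrt 82 := npair rfl rfl 82 (by norm_num)
  have nFD : ‖ptF - ptD‖ = (10:ℝ) := npair' rfl rfl 10 (by norm_num) (by norm_num)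
  have nFE : ‖ptF - ptE‖ = Real.sqrt 104 := npair rfl rfl 104 (by norm_num)
  have nFF : ‖ptF - ptF‖ = (0:ℝ) := by simp
  -- the reference index with value B
  have hlt : r - 1 < 2*t+1 := by omega
  have hib : medoidCounterexample t ⟨r-1, hlt⟩ = ptB := by
    rw [mc_val t r hts ⟨r-1, hlt⟩]
    have hco : ((⟨r-1, hlt⟩ : Fin (2*t+1)) : ℕ) = r-1 := rfl
    rw [hco, if_neg (by omega), if_pos (by omega)]
  have hmb := hmed ⟨r-1, hlt⟩
  rw [sum_eq t r hts hs, sum_eq t r hts hs, hib] at hmb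
  rw [nBA, nBB, nBC, nBD, nBE, nBF] at hmb
  have hval := mc_val t r hts i₀
  by_cases c1 : (i₀:ℕ) < r-1
  · exfalso
    have hA : medoidCounterexample t i₀ = ptA := by rw [hval, if_pos c1]
    rw [hA, nAA, nAB, nAC, nAD, nAE, nAF] at hmb
    linarith (config := { oracle := .fourierMotzkin }) only [hmb, hσ, b2u, b10l, b82u, b104l]
  by_cases c2 : (i₀:ℕ) < 2*r-1
  · -- medoid is ptB = (1,1); honest ball around (3,0)
    have hB : medoidCounterexample t i₀ = ptB := by
      rw [hval, if_neg c1, if_pos c2]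
    refine ⟨Or.inl (hB.trans rfl), !₂[3,0], by simp, 
      Finset.attachFin (Finset.Ico (2*r-1) (4*r))
        (fun m hm => by have := Finset.mem_Ico.mp hm; omega), ?_, ?_, ?_, b5⟩
    · rw [Finset.card_attachFin, Nat.card_Ico]; omega
    · intro i hi
      have hi' := Finset.mem_Ico.mp ((Finset.mem_attachFin _).mp hi)
      have hvi := mc_val t r hts i
      rw [Metric.mem_closedBall, dist_eq_norm]
      by_cases d3 : (i:ℕ) < 3*r-1
      · have : medoidCounterexample t i = ptC := by
          rw [hvi, if_neg (by omega), if_neg (by omega), if_pos d3]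
        exact le_of_eq (npair' (this.trans rfl) rfl 1 (by norm_num) (by norm_num))
      by_cases d4 : (i:ℕ) < 3*r+1
      · have : medoidCounterexample t i = ptD := by
          rw [hvi, if_neg (by omega), if_neg (by omega), if_neg d3, if_pos d4]
        exact le_of_eq (npair' (this.trans rfl) rfl 1 (by norm_num) (by norm_num))
      · have : medoidCounterexample t i = ptE := by
          rw [hvi, if_neg (by omega), if_neg (by omega), if_neg d3, if_neg d4,
            if_pos (by omega)]
        exact le_of_eq (npair' (this.trans rfl) rfl 1 (by norm_num) (by norm_num))
    · exact npair (hB.trans rfl) rfl 5 (by norm_num)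
  by_cases c3 : (i₀:ℕ) < 3*r-1
  · -- medoid is ptC = (3,1); honest ball around (1,0)
    have hC : medoidCounterexample t i₀ = ptC := by
      rw [hval, if_neg c1, if_neg c2, if_pos c3]
    refine ⟨Or.inr (hC.trans rfl), !₂[1,0], by simp, 
      Finset.attachFin (Finset.Ico 0 (2*r-1) ∪ Finset.Ico (3*r-1) (3*r+1))
        (fun m hm => by
          rcases Finset.mem_union.mp hm with h | h <;>
            (have := Finset.mem_Ico.mp h; omega)), ?_, ?_, ?_, b5⟩
    · rw [Finset.card_attachFin, Finset.card_union_of_disjoint (by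
        rw [Finset.disjoint_left]
        intro a ha hb
        have h1 := Finset.mem_Ico.mp ha
        have h2 := Finset.mem_Ico.mp hb
        omega), Nat.card_Ico, Nat.card_Ico]
      omega
    · intro i hi
      have hi' := (Finset.mem_attachFin _).mp hi
      have hvi := mc_val t r hts i
      rw [Metric.mem_closedBall, dist_eq_norm]
      rcases Finset.mem_union.mp hi' with h | h
      · have hio := Finset.mem_Ico.mp h
        by_cases d1 : (i:ℕ) < r-1
        · have : medoidCounterexample t i = ptA := by rw [hvi, if_pos d1]
          exact le_of_eq (npair' (this.trans rfl) rfl 1 (by norm_num) (by norm_num))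
        · have : medoidCounterexample t i = ptB := by
            rw [hvi, if_neg d1, if_pos (by omega)]
          exact le_of_eq (npair' (this.trans rfl) rfl 1 (by norm_num) (by norm_num))
      · have hio := Finset.mem_Ico.mp h
        have : medoidCounterexample t i = ptD := by
          rw [hvi, if_neg (by omega), if_neg (by omega), if_neg (by omega),
            if_pos (by omega)]
        exact le_of_eq (npair' (this.trans rfl) rfl 1 (by norm_num) (by norm_num))
    · exact npair (hC.trans rfl) rfl 5 (by norm_num)
  by_cases c4 : (i₀:ℕ) < 3*r+1
  · exfalso
    have hD : medoidCounterexample t i₀ = ptD := by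
      rw [hval, if_neg c1, if_neg c2, if_neg c3, if_pos c4]
    rw [hD, nDA, nDB, nDC, nDD, nDE, nDF] at hmb
    have hprod : (0:ℝ) ≤ ((r:ℝ) - 6) * (2 + Real.sqrt 2 - Real.sqrt 10) :=
      mul_nonneg (by linarith (config := { oracle := .fourierMotzkin }) only [hσ])
        (by linarith (config := { oracle := .fourierMotzkin }) only [b2l, b10u])
    linarith (config := { oracle := .fourierMotzkin }) only
      [hmb, hσ, b2l, b10u, b82u, hprod]
  by_cases c5 : (i₀:ℕ) < 4*r
  · exfalso
    have hE : medoidCounterexample t i₀ = ptE := by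
      rw [hval, if_neg c1, if_neg c2, if_neg c3, if_neg c4, if_pos c5]
    rw [hE, nEA, nEB, nEC, nED, nEE, nEF] at hmb
    linarith (config := { oracle := .fourierMotzkin }) only [hmb, hσ, b2u, b10l, b82u, b104l]
  · exfalso
    have hF : medoidCounterexample t i₀ = ptF := by
      rw [hval, if_neg c1, if_neg c2, if_neg c3, if_neg c4, if_neg c5]
    rw [hF, nFA, nFB, nFC, nFD, nFE, nFF] at hmb
    have hr0 : (0:ℝ) ≤ (r:ℝ) := by positivity
    have h1 := mul_le_mul_of_nonneg_left b104l hr0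
    have h2 := mul_le_mul_of_nonneg_left b82l hr0
    have h3 := mul_le_mul_of_nonneg_left b2u hr0
    have h4 := mul_le_mul_of_nonneg_left b10u hr0
    linarith (config := { oracle := .fourierMotzkin }) only
      [hσ, b2u, b2l, b10l, b82u, b104u, hmb, h1, h2, h3, h4]
end

section
/- (Geometric median satisfies 2(n−t)/(n−2t)-MEB validity.) Let n > 2t and v : Fin n → EuclideanSpace ℝ (Fin d). Let H ⊆ Fin n with |H| ≥ n − t and suppose v i ∈ closedBall(C*, r*) for all i ∈ H, where r* ≥ 0. Let μ ∈ EuclideanSpace ℝ (Fin d) be a geometric median of the inputs, i.e., ∑_{i} ‖v i − μ‖₂ ≤ ∑_{i} ‖v i − y‖₂ for every y ∈ EuclideanSpace ℝ (Fin d). Then ‖μ − C*‖₂ ≤ (2(n−t)/(n−2t)) · r*. -/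
/-- The geometric median satisfies `2(n-t)/(n-2t)`-MEB validity: if all honest points
(an index set `H` with `|H| ≥ n - t`) lie in `closedBall C* r*` and `μ` minimizes the
sum of Euclidean distances to all input points over `ℝ^d`, then
`‖μ - C*‖ ≤ (2(n-t)/(n-2t))·r*`. -/
theorem geometric_median_meb_validity (d n t : ℕ) (hn : n > 2 * t)
    (v : Fin n → EuclideanSpace ℝ (Fin d))
    (H : Finset (Fin n)) (hH : n - t ≤ H.card)
    (Cstar : EuclideanSpace ℝ (Fin d)) (rstar : ℝ) (hr : 0 ≤ rstar)
    (hball : ∀ i ∈ H, v i ∈ Metric.closedBall Cstar rstar)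
    (μ : EuclideanSpace ℝ (Fin d))
    (hmed : ∀ y : EuclideanSpace ℝ (Fin d), ∑ i, ‖v i - μ‖ ≤ ∑ i, ‖v i - y‖) :
    ‖μ - Cstar‖ ≤ (2 * ((n : ℝ) - t) / ((n : ℝ) - 2 * t)) * rstar := by
  set D : ℝ := ‖μ - Cstar‖ with hD
  have hD0 : 0 ≤ D := norm_nonneg _
  have hb : ∀ i ∈ H, ‖v i - Cstar‖ ≤ rstar := by
    intro i hi
    have := hball i hi
    rwa [Metric.mem_closedBall, dist_eq_norm] at this
  -- compare objective at μ and Cstar, split over H and Hᶜ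
  have h1 : ∑ i ∈ H, ‖v i - μ‖ + ∑ i ∈ Hᶜ, ‖v i - μ‖ ≤
      ∑ i ∈ H, ‖v i - Cstar‖ + ∑ i ∈ Hᶜ, ‖v i - Cstar‖ := by
    rw [Finset.sum_add_sum_compl, Finset.sum_add_sum_compl]
    exact hmed Cstar
  have h2 : (H.card : ℝ) * (D - rstar) ≤ ∑ i ∈ H, ‖v i - μ‖ := by
    have := Finset.card_nsmul_le_sum H (fun i => ‖v i - μ‖) (D - rstar) ?_
    · simpa [nsmul_eq_mul] using this
    · intro i hi
      have htri : D ≤ ‖v i - μ‖ + ‖v i - Cstar‖ := by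
        calc ‖μ - Cstar‖ ≤ ‖μ - v i‖ + ‖v i - Cstar‖ := norm_sub_le_norm_sub_add_norm_sub _ _ _
          _ = ‖v i - μ‖ + ‖v i - Cstar‖ := by rw [norm_sub_rev]
      have := hb i hi
      linarith
  have h3 : ∑ i ∈ H, ‖v i - Cstar‖ ≤ (H.card : ℝ) * rstar := by
    have := Finset.sum_le_card_nsmul H (fun i => ‖v i - Cstar‖) rstar hb
    simpa [nsmul_eq_mul] using this
  have h4 : ∑ i ∈ Hᶜ, ‖v i - Cstar‖ ≤ ∑ i ∈ Hᶜ, ‖v i - μ‖ + (Hᶜ.card : ℝ) * D := by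
    have := Finset.sum_le_card_nsmul Hᶜ (fun i => ‖v i - Cstar‖ - ‖v i - μ‖) D ?_
    · rw [Finset.sum_sub_distrib] at this
      have h5 : ((Hᶜ.card : ℕ) : ℝ) * D = (Hᶜ.card) • D := by simp [nsmul_eq_mul]
      rw [h5]; linarith
    · intro i _
      have := norm_sub_le_norm_sub_add_norm_sub (v i) μ Cstar
      show ‖v i - Cstar‖ - ‖v i - μ‖ ≤ D
      linarith
  have hcardc : (Hᶜ.card : ℝ) = (n : ℝ) - H.card := by
    have : Hᶜ.card = n - H.card := by
      simp [Finset.card_compl]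
    rw [this]
    have := H.card_le_univ
    simp at this
    push_cast [Nat.cast_sub this]
    ring
  have hHn : (H.card : ℝ) ≤ n := by
    have := H.card_le_univ
    exact_mod_cast by simpa using this
  have hHcast : (n : ℝ) - t ≤ (H.card : ℝ) := by
    have ht : t ≤ n := by omega
    have := hH
    have : ((n - t : ℕ) : ℝ) ≤ H.card := by exact_mod_cast this
    rwa [Nat.cast_sub ht] at this
  have hnt : (2 : ℝ) * t < n := by exact_mod_cast hn
  rw [hcardc] at h4
  -- key: (2|H| - n) D ≤ 2|H| r*
  have key : (2 * (H.card : ℝ) - n) * D ≤ 2 * (H.card : ℝ) * rstar := by nlinarith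
  rw [div_mul_eq_mul_div, le_div_iff₀ (by linarith)]
  nlinarith [mul_nonneg hr (by linarith : (0:ℝ) ≤ (H.card:ℝ) - ((n:ℝ) - t)),
    mul_nonneg hD0 (by linarith : (0:ℝ) ≤ (n:ℝ) - 2*t)]
end

section
/- ((δ,2)-relaxed convex validity implies (1 + 2δ/diam(H))-relaxed MEB validity.) Let H be a set of points in EuclideanSpace ℝ (Fin d) with H ⊆ closedBall(C*, r*), where r* > 0 and the diameter diam(H) = sup_{u,w ∈ H} ‖u − w‖₂ is strictly positive. Let δ ≥ 0 and suppose y ∈ EuclideanSpace ℝ (Fin d) satisfies ‖y − x‖₂ ≤ δ for some x in the convex hull of H. Then ‖y − C*‖₂ ≤ (1 + 2δ/diam(H)) · r*. -/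
open Metric Set

theorem Metric.diam_le_two_mul_of_subset_closedBall {α : Type*} [PseudoMetricSpace α]
    {s : Set α} {c : α} {r : ℝ} (hs : s ⊆ closedBall c r) (hne : s.Nonempty) :
    diam s ≤ 2 * r :=
  let ⟨_, hu⟩ := hne
  diam_le_of_subset_closedBall (dist_nonneg.trans (hs hu)) hs

theorem dist_le_add_of_dist_le_of_mem_convexHull {E : Type*} [SeminormedAddCommGroup E]
    [NormedSpace ℝ E] {s : Set E} {c x y : E} {r δ : ℝ} (hs : s ⊆ closedBall c r)
    (hx : x ∈ convexHull ℝ s) (hyx : dist y x ≤ δ) : dist y c ≤ r + δ :=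
  calc dist y c ≤ dist y x + dist x c := dist_triangle y x c
    _ ≤ δ + r := add_le_add hyx (convexHull_min hs (convex_closedBall c r) hx)
    _ = r + δ := add_comm δ r

theorem add_le_one_add_two_mul_div_mul {r δ D : ℝ} (hD : 0 < D) (hDr : D ≤ 2 * r)
    (hδ : 0 ≤ δ) : r + δ ≤ (1 + 2 * δ / D) * r :=
  calc r + δ = r + δ * 1 := by rw [mul_one]
    _ ≤ r + δ * (2 * r / D) := by gcongr; exact (one_le_div hD).2 hDr
    _ = (1 + 2 * δ / D) * r := by ring

theorem relaxed_convex_implies_relaxed_meb_general (d : ℕ)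
    (H : Set (EuclideanSpace ℝ (Fin d)))
    (Cstar : EuclideanSpace ℝ (Fin d)) (rstar : ℝ)
    (hH : H ⊆ Metric.closedBall Cstar rstar)
    (hdiam : 0 < Metric.diam H)
    (δ : ℝ)
    (y : EuclideanSpace ℝ (Fin d))
    (hy : ∃ x ∈ convexHull ℝ H, ‖y - x‖ ≤ δ) :
    ‖y - Cstar‖ ≤ (1 + 2 * δ / Metric.diam H) * rstar := by
  obtain ⟨x, hx, hyx⟩ := hy
  have hδ : 0 ≤ δ := (norm_nonneg _).trans hyx
  have hne : H.Nonempty := nonempty_iff_ne_empty.2 (by rintro rfl; simp at hdiam)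
  rw [← dist_eq_norm] at hyx ⊢
  calc dist y Cstar ≤ rstar + δ := dist_le_add_of_dist_le_of_mem_convexHull hH hx hyx
    _ ≤ (1 + 2 * δ / diam H) * rstar :=
      add_le_one_add_two_mul_div_mul hdiam (diam_le_two_mul_of_subset_closedBall hH hne) hδ

/-- `(δ,2)`-relaxed convex validity implies `(1 + 2δ/diam(H))`-relaxed MEB validity:
if the honest points `H` lie in `closedBall C* r*` with `r* > 0` and `diam H > 0`, and
`y` is within distance `δ` of some point of the convex hull of `H`, then
`‖y - C*‖ ≤ (1 + 2δ/diam(H))·r*`. -/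
theorem relaxed_convex_implies_relaxed_meb (d : ℕ)
    (H : Set (EuclideanSpace ℝ (Fin d)))
    (Cstar : EuclideanSpace ℝ (Fin d)) (rstar : ℝ) (hr : 0 < rstar)
    (hH : H ⊆ Metric.closedBall Cstar rstar)
    (hdiam : 0 < Metric.diam H)
    (δ : ℝ) (hδ : 0 ≤ δ)
    (y : EuclideanSpace ℝ (Fin d))
    (hy : ∃ x ∈ convexHull ℝ H, ‖y - x‖ ≤ δ) :
    ‖y - Cstar‖ ≤ (1 + 2 * δ / Metric.diam H) * rstar :=
  relaxed_convex_implies_relaxed_meb_general d H Cstar rstar hH hdiam δ y hy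
end

section
/- (Box validity implies √d-MEB validity.) Let H be a nonempty set of points in EuclideanSpace ℝ (Fin d) with H ⊆ closedBall(C*, r*), r* ≥ 0. Let y ∈ EuclideanSpace ℝ (Fin d) be a point in the trusted box of H, i.e., for every coordinate i ∈ Fin d there exist h₁, h₂ ∈ H with h₁ i ≤ y i ≤ h₂ i. Then ‖y − C*‖₂ ≤ √d · r*. -/
/-!
Each coordinate of `y` lies between the corresponding coordinates of two points of the ball
`closedBall C* r*`, so `|y i - C* i| ≤ r*` for every `i`; summing the squares of these `d`
coordinate bounds gives `‖y - C*‖ ≤ √d · r*`.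
-/

open Metric

theorem PiLp.dist_le_sqrt_card_mul {ι : Type*} [Fintype ι] {β : ι → Type*}
    [∀ i, SeminormedAddCommGroup (β i)] (x y : PiLp 2 β) {r : ℝ}
    (h : ∀ i, dist (x i) (y i) ≤ r) :
    dist x y ≤ √(Fintype.card ι) * r := by
  rcases isEmpty_or_nonempty ι with hι | ⟨⟨i₀⟩⟩
  · simp [PiLp.dist_eq_of_L2]
  have hr : 0 ≤ r := dist_nonneg.trans (h i₀)
  calc dist x y = √(∑ i, dist (x i) (y i) ^ 2) := PiLp.dist_eq_of_L2 x y
    _ ≤ √(∑ _i : ι, r ^ 2) := by gcongr with i; exact h i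
    _ = √(Fintype.card ι) * r := by
      simp [Real.sqrt_mul (Nat.cast_nonneg _), Real.sqrt_sq hr]

theorem Real.mem_closedBall_of_le_of_le {c r a b x : ℝ} (ha : a ∈ closedBall c r)
    (hb : b ∈ closedBall c r) (hax : a ≤ x) (hxb : x ≤ b) : x ∈ closedBall c r :=
  (convex_closedBall c r).ordConnected.out ha hb ⟨hax, hxb⟩

theorem box_validity_implies_sqrt_d_meb_general (d : ℕ)
    (H : Set (EuclideanSpace ℝ (Fin d)))
    (Cstar : EuclideanSpace ℝ (Fin d)) (rstar : ℝ)
    (hH : H ⊆ Metric.closedBall Cstar rstar)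
    (y : EuclideanSpace ℝ (Fin d))
    (hy : ∀ i : Fin d, ∃ h₁ ∈ H, ∃ h₂ ∈ H, h₁ i ≤ y i ∧ y i ≤ h₂ i) :
    ‖y - Cstar‖ ≤ Real.sqrt d * rstar := by
  have hcoord : ∀ i, ∀ h ∈ H, h i ∈ closedBall (Cstar i) rstar := fun i h hh =>
    (PiLp.dist_apply_le h Cstar i).trans (hH hh)
  have hbox : ∀ i, dist (y i) (Cstar i) ≤ rstar := fun i => by
    obtain ⟨h₁, hh₁, h₂, hh₂, hle₁, hle₂⟩ := hy i
    exact Real.mem_closedBall_of_le_of_le (hcoord i h₁ hh₁) (hcoord i h₂ hh₂) hle₁ hle₂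
  simpa [← dist_eq_norm] using PiLp.dist_le_sqrt_card_mul y Cstar hbox

/-- Box validity implies `√d`-MEB validity: if the honest points `H` lie in
`closedBall C* r*` and `y` lies in the trusted box of `H` (in every coordinate `i`,
`y i` is between the values `h₁ i` and `h₂ i` of some honest points), then
`‖y - C*‖ ≤ √d · r*`. -/
theorem box_validity_implies_sqrt_d_meb (d : ℕ)
    (H : Set (EuclideanSpace ℝ (Fin d))) (hne : H.Nonempty)
    (Cstar : EuclideanSpace ℝ (Fin d)) (rstar : ℝ) (hr : 0 ≤ rstar)
    (hH : H ⊆ Metric.closedBall Cstar rstar)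
    (y : EuclideanSpace ℝ (Fin d))
    (hy : ∀ i : Fin d, ∃ h₁ ∈ H, ∃ h₂ ∈ H, h₁ i ≤ y i ∧ y i ≤ h₂ i) :
    ‖y - Cstar‖ ≤ Real.sqrt d * rstar :=
  box_validity_implies_sqrt_d_meb_general d H Cstar rstar hH y hy
end
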